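/- Let D be a divisibility chain (a set of positive integers totally ordered by the divisibility relation). Then χ(D) ≤ 3 if and only if there do not exist elements a, b, b' of D such that 2a ∈ D, 2a divides b, and 3b divides b'. (Writing D = {d₁, d₂, d₃, …} with d₁ | d₂ | d₃ | ⋯ and ratios rᵢ = d_{i+1}/dᵢ, this condition says there do not exist indices i < j with rᵢ = 2 and 3 | r_j.) -/

import Mathlib

/-!
If `a, 2a ∈ D`, then in a 3-colouring the points `x, x + a, x + 2a, x + 3a` are joined at
distances `a` and `2a`, which forces `x` and `x + 3a` to share a colour; so every 3-colouring is
`3a`-periodic and no element of `D` can be a multiple of `3a`.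

Conversely, by compactness it suffices to colour `G(ℤ, E)` for finite `E ⊆ D`. Colour `x` by the
third of the circle `ℝ/ℤ` containing `s x / 3m`; this is proper as soon as `s d / 3m` lies in the
closed middle third for every `d ∈ E`. Take for `m` the least `a` with `2a ∈ E`, or `max E` if
there is none. The divisors of `m` in `E` then form a chain with ratios at least `3`. Going down
this chain, at each new divisor `a` (following `b`) `s` is corrected by a multiple of `3m / b`:
this keeps the earlier constraints, and since `3m / b ≤ m / a` it can reach the window required
by `a`.
Every other `d ∈ E` is `m e` with `3 ∤ e`; the constraint at `m` itself forces `3 ∤ s`, so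
`s d / 3m ≡ s e / 3 ∈ {1/3, 2/3}`.
-/

/-- The distance graph on ℤ with distance set `D`: distinct integers are adjacent
exactly when the absolute value of their difference lies in `D`. -/
def distGraph (D : Set ℕ) : SimpleGraph ℤ where
  Adj x y := x ≠ y ∧ (x - y).natAbs ∈ D
  symm := by
    constructor
    intro x y ⟨h1, h2⟩
    exact ⟨h1.symm, by rw [← Int.natAbs_neg, neg_sub] at h2; exact h2⟩
  loopless := by
    constructor
    intro x ⟨h, _⟩
    exact h rfl

theorem distGraph_adj_add {D : Set ℕ} {d : ℕ} (hd : d ∈ D) (hd0 : 0 < d) (x : ℤ) :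
    (distGraph D).Adj x (x + d) :=
  ⟨by omega, by simpa using hd⟩

theorem Fin.eq_of_ne_of_ne_three {u v w t : Fin 3} (hvw : v ≠ w) (hu : u ≠ v ∧ u ≠ w)
    (ht : t ≠ v ∧ t ≠ w) : t = u := by
  revert u v w t; decide

theorem distGraph_coloring_periodic {D : Set ℕ} {a : ℕ} (ha : a ∈ D) (h2a : 2 * a ∈ D)
    (ha0 : 0 < a) (C : (distGraph D).Coloring (Fin 3)) : Function.Periodic C (3 * a : ℤ) := by
  intro x
  have hA (y : ℤ) : C y ≠ C (y + a) := C.valid (distGraph_adj_add ha ha0 y)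
  have hB (y : ℤ) : C y ≠ C (y + a + a) := by
    simpa [add_assoc, ← two_mul] using C.valid (distGraph_adj_add h2a (by omega) y)
  rw [show x + 3 * a = x + a + a + a by ring]
  exact Fin.eq_of_ne_of_ne_three (hA (x + a)) ⟨hA x, hB x⟩
    ⟨(hB (x + a)).symm, (hA (x + a + a)).symm⟩

theorem distGraph_not_colorable_three {D : Set ℕ} {a b : ℕ} (ha : a ∈ D) (h2a : 2 * a ∈ D)
    (hb : b ∈ D) (ha0 : 0 < a) (hb0 : 0 < b) (hab : 3 * a ∣ b) : ¬ (distGraph D).Colorable 3 := by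
  rintro ⟨C⟩
  obtain ⟨k, rfl⟩ := hab
  have hper := (distGraph_coloring_periodic ha h2a ha0 C).nat_mul k 0
  refine C.valid (distGraph_adj_add hb hb0 0) ?_
  rw [← hper]
  push_cast
  ring_nf

/-- `s / 3m` is a rotation of the circle `ℝ/ℤ` sending every distance in `D` into the closed
middle third `[1/3, 2/3]`. -/
def MapsIntoMiddleThird (D : Set ℕ) (m s : ℤ) : Prop :=
  ∀ d ∈ D, m ≤ s * d % (3 * m) ∧ s * d % (3 * m) ≤ 2 * m

theorem Int.emod_div_ne_of_middleThird {m s x y : ℤ} (hm : 0 < m)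
    (h : m ≤ s * (x - y) % (3 * m) ∧ s * (x - y) % (3 * m) ≤ 2 * m) :
    s * x % (3 * m) / m ≠ s * y % (3 * m) / m := by
  set u := s * x % (3 * m)
  set w := s * y % (3 * m)
  intro heq
  have hdiff : s * (x - y) % (3 * m) = (u - w) % (3 * m) := by rw [mul_sub, Int.sub_emod]
  have hu := Int.emod_add_ediv_mul u m
  have hw := Int.emod_add_ediv_mul w m
  rw [heq] at hu
  have := Int.emod_nonneg u hm.ne'
  have := Int.emod_nonneg w hm.ne'
  have := Int.emod_lt_of_pos u hm
  have := Int.emod_lt_of_pos w hm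
  rw [hdiff] at h
  rcases le_or_gt w u with hwu | huw
  · rw [Int.emod_eq_of_lt (by linarith) (by linarith)] at h
    linarith
  · rw [← Int.add_emod_right, Int.emod_eq_of_lt (by linarith) (by linarith)] at h
    linarith

theorem distGraph_colorable_three_of_mapsIntoMiddleThird {D : Set ℕ} {m s : ℤ} (hm : 0 < m)
    (h : MapsIntoMiddleThird D m s) : (distGraph D).Colorable 3 := by
  have hnonneg (x : ℤ) : 0 ≤ s * x % (3 * m) / m :=
    Int.ediv_nonneg (Int.emod_nonneg _ (by omega)) hm.le
  refine (SimpleGraph.colorable_iff_exists_bdd_nat_coloring 3).2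
    ⟨.mk (fun x => (s * x % (3 * m) / m).toNat) ?_, fun x => ?_⟩
  · rintro x y ⟨-, hxy⟩ heq
    have heq : s * x % (3 * m) / m = s * y % (3 * m) / m := by
      have := hnonneg x; have := hnonneg y; omega
    rcases Int.natAbs_eq (x - y) with hd | hd
    · exact Int.emod_div_ne_of_middleThird hm (hd ▸ h _ hxy) heq
    · refine Int.emod_div_ne_of_middleThird hm ?_ heq.symm
      rw [show y - x = (x - y).natAbs by omega]
      exact h _ hxy
  · show (s * x % (3 * m) / m).toNat < 3
    have : s * x % (3 * m) / m < 3 :=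
      Int.ediv_lt_of_lt_mul hm (Int.emod_lt_of_pos _ (by omega))
    omega

theorem MapsIntoMiddleThird.exists_insert {L : Set ℕ} {m a q : ℕ} {s' : ℤ}
    (hs' : MapsIntoMiddleThird L m s') (hm : 0 < m) (hq : 3 ≤ q) (hm_dvd : a * q ∣ m)
    (hL : ∀ d ∈ L, a * q ∣ d) : ∃ s, MapsIntoMiddleThird (insert a L) m s := by
  obtain ⟨B, hB⟩ := hm_dvd
  have hB0 : 0 < B := Nat.pos_of_ne_zero (by rintro rfl; rw [mul_zero] at hB; omega)
  have ha0 : 0 < a := Nat.pos_of_ne_zero (by rintro rfl; rw [zero_mul, zero_mul] at hB; omega)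
  set r := ((s' : ℤ) - q * B) % (3 * B)
  have hr0 : 0 ≤ r := Int.emod_nonneg _ (by omega)
  have hr : r < 3 * B := Int.emod_lt_of_pos _ (by omega)
  -- `s := qB + r` lies in `[qB, 2qB)` and agrees with `s'` modulo `3B`.
  have hmod : q * B + r ≡ s' [ZMOD 3 * B] :=
    calc q * B + r ≡ q * B + (s' - q * B) [ZMOD 3 * B] := (Int.mod_modEq _ _).add_left _
      _ = s' := by ring
  refine ⟨q * B + r, fun d hd => ?_⟩
  rcases hd with rfl | hdL
  · have hm' : (m : ℤ) = d * q * B := by rw [hB]; push_cast; ring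
    have hrq : r < q * B := by
      have : (3 : ℤ) * B ≤ q * B := by exact_mod_cast Nat.mul_le_mul_right B hq
      omega
    have hlt : (q * B + r) * d < 2 * m := by
      rw [hm']; nlinarith [mul_lt_mul_of_pos_right hrq (show (0 : ℤ) < d by omega)]
    rw [Int.emod_eq_of_lt (by positivity) (by omega)]
    constructor <;> nlinarith
  · obtain ⟨g, hg⟩ := hL d hdL
    have hdvd3 : (3 * m : ℤ) ∣ 3 * B * d := ⟨g, by rw [hB, hg]; push_cast; ring⟩
    have : (q * B + r) * d % (3 * m) = s' * d % (3 * m) := (hmod.mul_right' (c := d)).of_dvd hdvd3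
    rw [this]
    exact hs' d hdL

theorem exists_mapsIntoMiddleThird_of_lacunary {m : ℕ} (hm : 0 < m) (L : Finset ℕ)
    (hdvd : ∀ d ∈ L, d ∣ m) (hchain : ∀ a ∈ L, ∀ b ∈ L, a ∣ b ∨ b ∣ a)
    (hlac : ∀ d ∈ L, 2 * d ∉ L) : ∃ s, MapsIntoMiddleThird L m s := by
  induction L using Finset.induction_on_min with
  | empty => exact ⟨0, by simp [MapsIntoMiddleThird]⟩
  | insert a L hlt ih =>
    obtain ⟨s', hs'⟩ := ih (fun d hd => hdvd d (Finset.mem_insert_of_mem hd))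
      (fun x hx y hy => hchain x (Finset.mem_insert_of_mem hx) y (Finset.mem_insert_of_mem hy))
      (fun d hd h2d => hlac d (Finset.mem_insert_of_mem hd) (Finset.mem_insert_of_mem h2d))
    rcases L.eq_empty_or_nonempty with rfl | hne
    · obtain ⟨M, hM⟩ := hdvd a (Finset.mem_insert_self a ∅)
      refine ⟨M, fun d hd => ?_⟩
      obtain rfl : d = a := by simpa using hd
      have hMd : (M : ℤ) * d = m := by rw [hM]; push_cast; ring
      rw [hMd, Int.emod_eq_of_lt (by omega) (by omega)]
      omega
    set b := L.min' hne
    have hbL : b ∈ L := L.min'_mem hne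
    have hab : a < b := hlt b hbL
    have ha0 : 0 < a := Nat.pos_of_dvd_of_pos (hdvd a (Finset.mem_insert_self a L)) hm
    obtain ⟨q, hq⟩ : a ∣ b := (hchain a (by simp) b (by simp [hbL])).resolve_right
      fun h => absurd (Nat.le_of_dvd ha0 h) (by omega)
    have hq3 : 3 ≤ q := by
      have : q ≠ 0 := by rintro rfl; omega
      have : q ≠ 1 := by rintro rfl; omega
      have : q ≠ 2 := by
        rintro rfl
        exact hlac a (by simp) (by rw [mul_comm, ← hq]; simp [hbL])
      omega
    have hbd (d : ℕ) (hdL : d ∈ L) : b ∣ d := by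
      refine (hchain b (by simp [hbL]) d (by simp [hdL])).elim id fun h => ?_
      obtain rfl : d = b := le_antisymm (Nat.le_of_dvd (by omega) h) (L.min'_le d hdL)
      exact dvd_rfl
    rw [Finset.coe_insert]
    exact hs'.exists_insert hm hq3 (hq ▸ hdvd b (by simp [hbL])) (hq ▸ hbd)

theorem exists_mapsIntoMiddleThird_of_anchor {E : Finset ℕ} {m : ℕ} (hmE : m ∈ E) (hm : 0 < m)
    (hchain : ∀ a ∈ E, ∀ b ∈ E, a ∣ b ∨ b ∣ a) (hlow : ∀ x ∈ E, 2 * x ∈ E → ¬ 2 * x ∣ m)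
    (hhigh : ∀ d ∈ E, ¬ 3 * m ∣ d) : ∃ s, MapsIntoMiddleThird E m s := by
  classical
  obtain ⟨s, hs⟩ := exists_mapsIntoMiddleThird_of_lacunary hm (E.filter (· ∣ m))
    (fun d hd => (Finset.mem_filter.1 hd).2)
    (fun a ha b hb => hchain a (Finset.mem_filter.1 ha).1 b (Finset.mem_filter.1 hb).1)
    (fun d hd h2d => hlow d (Finset.mem_filter.1 hd).1 (Finset.mem_filter.1 h2d).1
      (Finset.mem_filter.1 h2d).2)
  have hs3 : ¬ (3 : ℤ) ∣ s := by
    intro h3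
    have := (hs m (by simp [hmE])).1
    rw [Int.emod_eq_zero_of_dvd (mul_dvd_mul_right h3 _)] at this
    omega
  refine ⟨s, fun d hd => ?_⟩
  by_cases hdm : d ∣ m
  · exact hs d (by simpa [hdm] using hd)
  obtain ⟨e, rfl⟩ := (hchain m hmE d hd).resolve_right hdm
  have he : ¬ (3 : ℤ) ∣ e := fun h =>
    hhigh _ hd (by rw [mul_comm 3]; exact mul_dvd_mul_left m (by exact_mod_cast h))
  have hse : ¬ (3 : ℤ) ∣ s * e := fun h => (Int.prime_three.dvd_mul.1 h).elim hs3 he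
  have hmod : s * ((m * e : ℕ) : ℤ) % (3 * m) = m * (s * e % 3) := by
    rw [← Int.mul_emod_mul_of_pos _ _ (by omega)]; push_cast; ring_nf
  rw [hmod]
  rcases (by omega : s * e % 3 = 1 ∨ s * e % 3 = 2) with h | h <;> rw [h] <;> omega

theorem exists_mapsIntoMiddleThird_of_least_double {E : Finset ℕ} (hpos : ∀ d ∈ E, 0 < d)
    (hchain : ∀ a ∈ E, ∀ b ∈ E, a ∣ b ∨ b ∣ a)
    (hfree : ∀ a ∈ E, 2 * a ∈ E → ∀ d ∈ E, ¬ 3 * (2 * a) ∣ d) {m : ℕ} (hmE : m ∈ E)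
    (h2m : 2 * m ∈ E) (hmin : ∀ x ∈ E, 2 * x ∈ E → m ≤ x) : ∃ s, MapsIntoMiddleThird E m s := by
  have hm := hpos m hmE
  refine exists_mapsIntoMiddleThird_of_anchor hmE hm hchain (fun x hx h2x h => ?_)
    (fun d hd h3 => hfree m hmE h2m d hd ?_)
  · have := hmin x hx h2x
    have := Nat.le_of_dvd hm h
    have := hpos x hx
    omega
  · rcases hchain d hd (2 * m) h2m with h | ⟨e, rfl⟩
    · have := Nat.le_of_dvd (by omega) (h3.trans h)
      omega
    · have h3e : 3 ∣ 2 * e :=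
        Nat.dvd_of_mul_dvd_mul_right hm (by rwa [show 2 * e * m = 2 * m * e by ring])
      exact mul_comm (2 * m) 3 ▸ mul_dvd_mul_left _ (by omega)

theorem exists_mapsIntoMiddleThird {E : Finset ℕ} (hpos : ∀ d ∈ E, 0 < d)
    (hchain : ∀ a ∈ E, ∀ b ∈ E, a ∣ b ∨ b ∣ a)
    (hfree : ∀ a ∈ E, 2 * a ∈ E → ∀ d ∈ E, ¬ 3 * (2 * a) ∣ d) :
    ∃ m s : ℤ, 0 < m ∧ MapsIntoMiddleThird E m s := by
  classical
  rcases E.eq_empty_or_nonempty with rfl | hne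
  · exact ⟨1, 0, one_pos, by simp [MapsIntoMiddleThird]⟩
  by_cases hdouble : (E.filter fun a => 2 * a ∈ E).Nonempty
  · set m := (E.filter fun a => 2 * a ∈ E).min' hdouble
    obtain ⟨hmE, h2m⟩ := Finset.mem_filter.1 ((E.filter fun a => 2 * a ∈ E).min'_mem hdouble)
    obtain ⟨s, hs⟩ := exists_mapsIntoMiddleThird_of_least_double hpos hchain hfree hmE h2m
      fun x hx h2x => (E.filter fun a => 2 * a ∈ E).min'_le x (Finset.mem_filter.2 ⟨hx, h2x⟩)
    exact ⟨m, s, by have := hpos m hmE; omega, hs⟩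
  · set m := E.max' hne
    have hmE : m ∈ E := E.max'_mem hne
    have hm := hpos m hmE
    obtain ⟨s, hs⟩ := exists_mapsIntoMiddleThird_of_anchor hmE hm hchain
      (fun x hx h2x => absurd ⟨x, Finset.mem_filter.2 ⟨hx, h2x⟩⟩ hdouble)
      (fun d hd h3 => by
        have := Nat.le_of_dvd (hpos d hd) h3
        have := E.le_max' d hd
        omega)
    exact ⟨m, s, by omega, hs⟩

theorem distGraph_colorable_of_forall_finset {D : Set ℕ} {n : ℕ}
    (h : ∀ E : Finset ℕ, ↑E ⊆ D → (distGraph E).Colorable n) : (distGraph D).Colorable n := by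
  classical
  refine SimpleGraph.nonempty_hom_of_forall_finite_subgraph_hom fun G' hG' => ?_
  let E := ((hG'.toFinset ×ˢ hG'.toFinset).image fun p => (p.1 - p.2).natAbs).filter (· ∈ D)
  refine (h E fun d hd => (Finset.mem_filter.1 hd).2).some.comp
    ⟨Subtype.val, fun {x y} hxy => ?_⟩
  obtain ⟨hne, hD⟩ := G'.adj_sub hxy
  exact ⟨hne, Finset.mem_filter.2
    ⟨Finset.mem_image.2 ⟨(x, y), by simp [x.2, y.2], rfl⟩, hD⟩⟩

theorem distGraph_colorable_three {D : Set ℕ} (hpos : ∀ d ∈ D, 0 < d)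
    (hchain : ∀ a ∈ D, ∀ b ∈ D, a ∣ b ∨ b ∣ a)
    (hfree : ∀ a ∈ D, 2 * a ∈ D → ∀ d ∈ D, ¬ 3 * (2 * a) ∣ d) : (distGraph D).Colorable 3 :=
  distGraph_colorable_of_forall_finset fun _ hE => by
    obtain ⟨m, s, hm, hs⟩ := exists_mapsIntoMiddleThird (fun d hd => hpos d (hE hd))
      (fun a ha b hb => hchain a (hE ha) b (hE hb))
      (fun a ha h2a d hd => hfree a (hE ha) (hE h2a) d (hE hd))
    exact distGraph_colorable_three_of_mapsIntoMiddleThird hm hs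

/-- For a divisibility chain `D`, `χ(D) ≤ 3` iff there do not
exist elements `a, b, b' ∈ D` with `2a ∈ D`, `2a ∣ b`, and `3b ∣ b'`. -/
theorem distGraph_chromaticNumber_le_three_iff (D : Set ℕ)
    (hpos : ∀ d ∈ D, 0 < d) (hchain : ∀ a ∈ D, ∀ b ∈ D, a ∣ b ∨ b ∣ a) :
    (distGraph D).chromaticNumber ≤ 3 ↔
      ¬ ∃ a ∈ D, ∃ b ∈ D, ∃ b' ∈ D, 2 * a ∈ D ∧ 2 * a ∣ b ∧ 3 * b ∣ b' := by
  rw [show (3 : ℕ∞) = ((3 : ℕ) : ℕ∞) from rfl, SimpleGraph.chromaticNumber_le_iff_colorable]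
  constructor
  · rintro hcol ⟨a, ha, b, -, b', hb', h2a, hab, hbb'⟩
    have h3a : 3 * a ∣ b' :=
      (mul_dvd_mul_left 3 ((dvd_mul_left a 2).trans hab)).trans hbb'
    exact distGraph_not_colorable_three ha h2a hb' (hpos a ha) (hpos b' hb') h3a hcol
  · intro hnp
    exact distGraph_colorable_three hpos hchain fun a ha h2a d hd h =>
      hnp ⟨a, ha, 2 * a, h2a, d, hd, h2a, dvd_rfl, h⟩
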